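/- For two-sided matching instances in which every agent has quantile parameter h_i ≥ 1/2, the half-DA lottery — assigning probability 1/2 to the N-optimal stable matching (output of N-proposing deferred acceptance) and probability 1/2 to the M-optimal stable matching — gives every agent her best achievable stable partner as her quantile representative, and is therefore a stable lottery. -/
import Mathlib


open scoped Classical
open Finset

/-- Total probability mass of options strictly worse than `o` under strict preference `p`
(`p u v` means `u` is strictly preferred to `v`). -/
noncomputable def sWorse {O : Type*} [Fintype O] (x : O → ℝ) (p : O → O → Prop) (o : O) : ℝ :=
  ∑ o' ∈ univ.filter (fun o' => p o o'), x o'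

/-- Total probability mass of options weakly worse than `o`. -/
noncomputable def wWorse {O : Type*} [Fintype O] (x : O → ℝ) (p : O → O → Prop) (o : O) : ℝ :=
  ∑ o' ∈ univ.filter (fun o' => p o o' ∨ o' = o), x o'

/-- `x` is a lottery (probability distribution) over the finite set of options. -/
def IsLottery {O : Type*} [Fintype O] (x : O → ℝ) : Prop :=
  (∀ o, 0 ≤ x o) ∧ ∑ o, x o = 1

/-- `o` is the `h`-quantile representative of lottery `x` with respect to strict preference `p`:
for `h = 1` it is the most preferred option with positive probability; for `h < 1` it is the
option whose strictly-worse mass is at most `h` while its weakly-worse mass exceeds `h`. -/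
def IsRep {O : Type*} [Fintype O] (x : O → ℝ) (p : O → O → Prop) (h : ℝ) (o : O) : Prop :=
  (h = 1 ∧ 0 < x o ∧ ∀ o', p o' o → x o' = 0) ∨
  (h < 1 ∧ sWorse x p o ≤ h ∧ h < wWorse x p o)

/-- A doubly stochastic lottery over two-sided matchings. -/
def IsDS {N M : Type*} [Fintype N] [Fintype M] (x : N → M → ℝ) : Prop :=
  (∀ i g, 0 ≤ x i g) ∧ (∀ i, ∑ g, x i g = 1) ∧ (∀ g, ∑ i, x i g = 1)

/-- Stability of a lottery over two-sided matchings: no blocking pair with respect to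
quantile representatives. -/
def TwoStable {N M : Type*} [Fintype N] [Fintype M]
    (pN : N → M → M → Prop) (pM : M → N → N → Prop) (hN : N → ℝ) (hM : M → ℝ)
    (x : N → M → ℝ) : Prop :=
  ∀ i j u v, IsRep (x i) (pN i) (hN i) u → IsRep (fun k => x k j) (pM j) (hM j) v →
    ((pN i u j ∨ u = j) ∨ (pM j v i ∨ v = i))

/-- Lottery `y` Pareto dominates lottery `x` with respect to the quantile representatives of
all agents on both sides. -/
def TwoDom {N M : Type*} [Fintype N] [Fintype M]
    (pN : N → M → M → Prop) (pM : M → N → N → Prop) (hN : N → ℝ) (hM : M → ℝ)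
    (y x : N → M → ℝ) : Prop :=
  (∀ i u v, IsRep (y i) (pN i) (hN i) u → IsRep (x i) (pN i) (hN i) v →
    (pN i u v ∨ u = v)) ∧
  (∀ j u v, IsRep (fun k => y k j) (pM j) (hM j) u →
    IsRep (fun k => x k j) (pM j) (hM j) v → (pM j u v ∨ u = v)) ∧
  ((∃ i u v, IsRep (y i) (pN i) (hN i) u ∧ IsRep (x i) (pN i) (hN i) v ∧ pN i u v) ∨
   (∃ j u v, IsRep (fun k => y k j) (pM j) (hM j) u ∧
      IsRep (fun k => x k j) (pM j) (hM j) v ∧ pM j u v))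

/-- Integral stability of a perfect matching `μ`. -/
def IntStable {N M : Type*} (pN : N → M → M → Prop) (pM : M → N → N → Prop)
    (μ : N ≃ M) : Prop :=
  ∀ i j, ¬ (pN i j (μ i) ∧ pM j i (μ.symm j))

/-- The half-DA lottery: probability 1/2 on each of the matchings `μN` and `μM`. -/
noncomputable def halfDA {N M : Type*} (μN μM : N ≃ M) : N → M → ℝ :=
  fun i j => (1/2) * ((if μN i = j then 1 else 0) + (if μM i = j then 1 else 0))

lemma halfSum_bound {O : Type*} [Fintype O] (x : O → ℝ) (a b : O)
    (hx : ∀ o, x o = (1/2) * ((if a = o then 1 else 0) + (if b = o then 1 else 0)))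
    (S : Finset O) (ha : a ∉ S) : ∑ o ∈ S, x o ≤ 1/2 := by
  have h1 : ∑ o ∈ S, x o = ∑ o ∈ S, (1/2) * (if b = o then (1:ℝ) else 0) := by
    refine Finset.sum_congr rfl fun o ho => ?_
    rw [hx o, if_neg (by rintro rfl; exact ha ho)]
    ring
  rw [h1, ← Finset.mul_sum, Finset.sum_ite_eq]
  split <;> norm_num

lemma halfSum_supp {O : Type*} [Fintype O] (x : O → ℝ) (a b : O)
    (hx : ∀ o, x o = (1/2) * ((if a = o then 1 else 0) + (if b = o then 1 else 0)))
    (S : Finset O) (ha : a ∈ S) (hb : b ∈ S) : ∑ o ∈ S, x o = 1 := by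
  have h0 : ∑ o ∈ Sᶜ, x o = 0 := by
    refine Finset.sum_eq_zero fun o ho => ?_
    simp only [Finset.mem_compl] at ho
    rw [hx o, if_neg (by rintro rfl; exact ho ha), if_neg (by rintro rfl; exact ho hb)]
    ring
  have htot : ∑ o, x o = 1 := by
    simp only [hx]
    rw [← Finset.mul_sum, Finset.sum_add_distrib, Finset.sum_ite_eq, Finset.sum_ite_eq]
    simp
    norm_num
  have := Finset.sum_add_sum_compl S x
  rw [h0, htot] at this
  linarith

lemma halfDA_key {O : Type*} [Fintype O] (p : O → O → Prop) (hst : IsStrictTotalOrder O p)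
    {h : ℝ} (hh1 : 1/2 ≤ h) (hh2 : h ≤ 1) {a b : O} (hab : b = a ∨ p a b)
    (x : O → ℝ)
    (hx : ∀ o, x o = (1/2) * ((if a = o then 1 else 0) + (if b = o then 1 else 0))) :
    IsRep x p h a ∧ ∀ u, IsRep x p h u → u = a := by
  haveI := hst
  have irr : ∀ o, ¬ p o o := fun o => irrefl_of p o
  have tr : ∀ {o1 o2 o3}, p o1 o2 → p o2 o3 → p o1 o3 :=
    fun h1 h2 => trans_of p h1 h2
  have tri : ∀ u v : O, p u v ∨ u = v ∨ p v u := fun u v => trichotomous_of p u v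
  have hxa : (1:ℝ)/2 ≤ x a := by
    rw [hx a, if_pos rfl]; split <;> norm_num
  have hpab : ∀ {o}, p o a → p o b := by
    intro o ho; rcases hab with rfl | hb
    · exact ho
    · exact tr ho hb
  have hw : wWorse x p a = 1 := by
    refine halfSum_supp x a b hx _ ?_ ?_ <;>
      simp only [Finset.mem_filter, Finset.mem_univ, true_and]
    · tauto
    · rcases hab with rfl | hb
      · tauto
      · tauto
  have hs : sWorse x p a ≤ 1/2 := by
    refine halfSum_bound x a b hx _ ?_
    simp [irr a]
  have hrep : IsRep x p h a := by
    rcases lt_or_eq_of_le hh2 with hlt | rfl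
    · exact Or.inr ⟨hlt, le_trans hs hh1, by rw [hw]; exact hlt⟩
    · refine Or.inl ⟨rfl, lt_of_lt_of_le (by norm_num) hxa, fun o' ho' => ?_⟩
      rw [hx o', if_neg (by rintro rfl; exact irr _ ho'),
        if_neg (by rintro rfl; exact irr _ (hpab ho'))]
      ring
  refine ⟨hrep, fun u hu => ?_⟩
  rcases tri u a with hua | rfl | hau
  · exfalso
    rcases hu with ⟨_, hxu, _⟩ | ⟨hlt, hsu, _⟩
    · rw [hx u, if_neg (by rintro rfl; exact irr _ hua),
        if_neg (by rintro rfl; exact irr _ (hpab hua))] at hxu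
      norm_num at hxu
    · have h1 : sWorse x p u = 1 := by
        refine halfSum_supp x a b hx _ ?_ ?_ <;>
          simp only [Finset.mem_filter, Finset.mem_univ, true_and]
        · exact hua
        · exact hpab hua
      rw [sWorse] at hsu
      rw [sWorse] at h1
      linarith
  · rfl
  · exfalso
    rcases hu with ⟨_, _, hz⟩ | ⟨_, _, hwu⟩
    · have := hz a hau
      linarith
    · have h1 : wWorse x p u ≤ 1/2 := by
        refine halfSum_bound x a b hx _ ?_
        simp only [Finset.mem_filter, Finset.mem_univ, true_and, not_or]
        exact ⟨fun hpa => irr _ (tr hau hpa), fun heq => irr _ (heq ▸ hau)⟩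
      rw [wWorse] at hwu h1
      linarith

/-- When every quantile parameter is at least 1/2, the half-DA lottery over the N-optimal
stable matching `μN` and the M-optimal stable matching `μM` gives every agent her best
achievable stable partner as her quantile representative, and is a stable lottery. -/
theorem stmt18 {N M : Type*} [Fintype N] [Fintype M]
    (pN : N → M → M → Prop) (pM : M → N → N → Prop)
    (hpN : ∀ i, IsStrictTotalOrder M (pN i)) (hpM : ∀ j, IsStrictTotalOrder N (pM j))
    (hN : N → ℝ) (hM : M → ℝ)
    (hhN : ∀ i, 1/2 ≤ hN i ∧ hN i ≤ 1) (hhM : ∀ j, 1/2 ≤ hM j ∧ hM j ≤ 1)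
    (μN μM : N ≃ M) (hsN : IntStable pN pM μN) (hsM : IntStable pN pM μM)
    (hoptN : ∀ μ : N ≃ M, IntStable pN pM μ → ∀ i, μ i = μN i ∨ pN i (μN i) (μ i))
    (hoptM : ∀ μ : N ≃ M, IntStable pN pM μ → ∀ j,
      μ.symm j = μM.symm j ∨ pM j (μM.symm j) (μ.symm j)) :
    (∀ i, IsRep (halfDA μN μM i) (pN i) (hN i) (μN i)) ∧
    (∀ j, IsRep (fun k => halfDA μN μM k j) (pM j) (hM j) (μM.symm j)) ∧
    TwoStable pN pM hN hM (halfDA μN μM) := by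
  have rN : ∀ i, IsRep (halfDA μN μM i) (pN i) (hN i) (μN i) ∧
      ∀ u, IsRep (halfDA μN μM i) (pN i) (hN i) u → u = μN i := by
    intro i
    refine halfDA_key (pN i) (hpN i) (hhN i).1 (hhN i).2
      (b := μM i) (hoptN μM hsM i) _ (fun o => rfl)
  have rM : ∀ j, IsRep (fun k => halfDA μN μM k j) (pM j) (hM j) (μM.symm j) ∧
      ∀ u, IsRep (fun k => halfDA μN μM k j) (pM j) (hM j) u → u = μM.symm j := by
    intro j
    refine halfDA_key (pM j) (hpM j) (hhM j).1 (hhM j).2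
      (b := μN.symm j) (hoptM μN hsN j) _ (fun o => ?_)
    have e1 : (μN o = j) ↔ (μN.symm j = o) := by
      constructor <;> intro h <;> simp [← h]
    have e2 : (μM o = j) ↔ (μM.symm j = o) := by
      constructor <;> intro h <;> simp [← h]
    simp only [halfDA, e1, e2]
    ring
  refine ⟨fun i => (rN i).1, fun j => (rM j).1, ?_⟩
  intro i j u v hu hv
  have hu' := (rN i).2 u hu
  have hv' := (rM j).2 v hv
  subst hu' hv'
  by_contra hc
  push_neg at hc
  obtain ⟨⟨hc1, hc2⟩, hc3, hc4⟩ := hc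
  haveI := hpN i
  haveI := hpM j
  have h1 : pN i j (μN i) := by
    rcases trichotomous_of (pN i) j (μN i) with h | h | h
    · exact h
    · exact absurd h.symm hc2
    · exact absurd h hc1
  have h2 : pM j i (μM.symm j) := by
    rcases trichotomous_of (pM j) i (μM.symm j) with h | h | h
    · exact h
    · exact absurd h.symm hc4
    · exact absurd h hc3
  have h3 : pN i j (μM i) := by
    rcases hoptN μM hsM i with h | h
    · rw [h]; exact h1
    · exact trans_of (pN i) h1 h
  exact hsM i j ⟨h3, h2⟩
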